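/- Let f : ℝ³ → ℝ be nonnegative and differentiable at (1,1,1), and define its symmetrization on the positive orthant by f^Sym(σ₁,σ₂,σ₃) = (1/2)·f(σ₁,σ₂,σ₃) + (1/2)·(σ₁σ₂σ₃)·f(1/σ₁,1/σ₂,1/σ₃). Suppose f preserves structure, i.e., f(σ) ≥ f(1,1,1) for all σ in the positive orthant, and f favors isometry, i.e., f^Sym(σ) ≥ f^Sym(1,1,1) for all σ in the positive orthant. Then f(1,1,1) = 0 and the gradient of f at (1,1,1) is (0,0,0). -/

import Mathlib

/-!
Since `f ≥ f(1,1,1)` on the open positive orthant, `(1,1,1)` is an interior minimum and the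
gradient vanishes there. Along the diagonal, `f^Sym(t,t,t) = ½ f(t,t,t) + ½ t³ f(1/t,1/t,1/t)`
then has derivative `½·0 + ½·(3 f(1,1,1) - 0) = (3/2) f(1,1,1)` at `t = 1`, where it is also
minimal; so `f(1,1,1) = 0`.
-/

open Filter Topology

variable {ι : Type*}

noncomputable def symmetrization [Fintype ι] (f : (ι → ℝ) → ℝ) (σ : ι → ℝ) : ℝ :=
  (1/2) * f σ + (1/2) * (∏ i, σ i) * f (fun i => (σ i)⁻¹)

lemma eventually_forall_pos_nhds [Finite ι] {x : ι → ℝ} (hx : ∀ i, 0 < x i) :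
    ∀ᶠ y in 𝓝 x, ∀ i, 0 < y i :=
  eventually_all.2 fun i => (continuous_apply i).continuousAt.eventually (lt_mem_nhds (hx i))

lemma isLocalMin_one_of_forall_pos_le [Finite ι] {g : (ι → ℝ) → ℝ}
    (hg : ∀ σ : ι → ℝ, (∀ i, 0 < σ i) → g (fun _ => 1) ≤ g σ) : IsLocalMin g (fun _ => 1) :=
  (eventually_forall_pos_nhds fun _ => one_pos).mono hg

lemma hasDerivAt_comp_diagonal_of_hasFDerivAt_zero [Fintype ι] {f : (ι → ℝ) → ℝ} {g : ℝ → ℝ}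
    {g' t : ℝ}
    (hf : HasFDerivAt f (0 : (ι → ℝ) →L[ℝ] ℝ) (fun _ => g t)) (hg : HasDerivAt g g' t) :
    HasDerivAt (fun s => f (fun _ => g s)) 0 t := by
  have hdiag : HasDerivAt (fun s (_ : ι) => g s) (fun _ => g') t := hasDerivAt_pi.2 fun _ => hg
  simpa [Function.comp_def] using hf.comp_hasDerivAt t hdiag

lemma hasDerivAt_symmetrization_diagonal [Fintype ι] {f : (ι → ℝ) → ℝ}
    (hf : HasFDerivAt f (0 : (ι → ℝ) →L[ℝ] ℝ) (fun _ => 1)) :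
    HasDerivAt (fun t => symmetrization f (fun _ => t))
      (Fintype.card ι / 2 * f (fun _ => 1)) 1 := by
  have hf_diag : HasDerivAt (fun t => f (fun _ => t)) 0 1 :=
    hasDerivAt_comp_diagonal_of_hasFDerivAt_zero hf (hasDerivAt_id 1)
  have hf_inv_diag : HasDerivAt (fun t => f (fun _ => t⁻¹)) 0 1 :=
    hasDerivAt_comp_diagonal_of_hasFDerivAt_zero (by simpa using hf) (hasDerivAt_inv one_ne_zero)
  have hpow : HasDerivAt (fun t : ℝ => t ^ Fintype.card ι) (Fintype.card ι) 1 := by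
    simpa using hasDerivAt_pow (Fintype.card ι) (1 : ℝ)
  have h : HasDerivAt
      (fun t => 1/2 * f (fun _ => t) + 1/2 * (t ^ Fintype.card ι * f (fun _ => t⁻¹)))
      (1/2 * 0 + 1/2 * (Fintype.card ι * f (fun _ => 1⁻¹) + 1 ^ Fintype.card ι * 0)) 1 :=
    (hf_diag.const_mul _).add ((hpow.mul hf_inv_diag).const_mul _)
  have hsym : (fun t => symmetrization f (fun _ => t)) =
      fun t => 1/2 * f (fun _ => t) + 1/2 * (t ^ Fintype.card ι * f (fun _ => t⁻¹)) := by
    funext t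
    simp only [symmetrization, Finset.prod_const, Finset.card_univ]
    ring
  rw [hsym]
  exact h.congr_deriv (by simp only [inv_one, one_pow]; ring)

theorem apply_one_eq_zero_and_fderiv_eq_zero [Fintype ι] [Nonempty ι] {f : (ι → ℝ) → ℝ}
    (hf : DifferentiableAt ℝ f (fun _ => 1))
    (h_struct : ∀ σ : ι → ℝ, (∀ i, 0 < σ i) → f (fun _ => 1) ≤ f σ)
    (h_isom : ∀ σ : ι → ℝ, (∀ i, 0 < σ i) →
      symmetrization f (fun _ => 1) ≤ symmetrization f σ) :
    f (fun _ => 1) = 0 ∧ fderiv ℝ f (fun _ => 1) = 0 := by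
  have hgrad : fderiv ℝ f (fun _ => 1) = 0 :=
    (isLocalMin_one_of_forall_pos_le h_struct).fderiv_eq_zero
  have hdiag := hasDerivAt_symmetrization_diagonal (hgrad ▸ hf.hasFDerivAt)
  have hmin_diag : IsLocalMin (fun t => symmetrization f (fun _ => t)) 1 :=
    (isLocalMin_one_of_forall_pos_le h_isom).comp_continuous
      (continuous_pi fun _ => continuous_id).continuousAt
  have hcard : (Fintype.card ι : ℝ) ≠ 0 := Nat.cast_ne_zero.2 Fintype.card_ne_zero
  refine ⟨?_, hgrad⟩
  simpa [hcard] using hdiag.deriv.symm.trans hmin_diag.deriv_eq_zero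

theorem statement_5_general (f : (Fin 3 → ℝ) → ℝ)
    (hf_diff : DifferentiableAt ℝ f (fun _ => 1))
    (fSym : (Fin 3 → ℝ) → ℝ)
    (hfSym : ∀ σ : Fin 3 → ℝ, fSym σ =
      (1/2) * f σ + (1/2) * (∏ i, σ i) * f (fun i => (σ i)⁻¹))
    (h_struct : ∀ σ : Fin 3 → ℝ, (∀ i, 0 < σ i) → f (fun _ => 1) ≤ f σ)
    (h_isom : ∀ σ : Fin 3 → ℝ, (∀ i, 0 < σ i) → fSym (fun _ => 1) ≤ fSym σ) :
    f (fun _ => 1) = 0 ∧ fderiv ℝ f (fun _ => 1) = 0 := by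
  obtain rfl : fSym = symmetrization f := funext hfSym
  exact apply_one_eq_zero_and_fderiv_eq_zero hf_diff h_struct h_isom

/-- If a nonnegative distortion function `f` (differentiable at
`(1,1,1)`) preserves structure and its symmetrization favors isometry, then
`f(1,1,1) = 0` and the gradient of `f` at `(1,1,1)` vanishes. -/
theorem statement_5 (f : (Fin 3 → ℝ) → ℝ)
    (hf_nonneg : ∀ σ, 0 ≤ f σ)
    (hf_diff : DifferentiableAt ℝ f (fun _ => 1))
    (fSym : (Fin 3 → ℝ) → ℝ)
    (hfSym : ∀ σ : Fin 3 → ℝ, fSym σ =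
      (1/2) * f σ + (1/2) * (∏ i, σ i) * f (fun i => (σ i)⁻¹))
    (h_struct : ∀ σ : Fin 3 → ℝ, (∀ i, 0 < σ i) → f (fun _ => 1) ≤ f σ)
    (h_isom : ∀ σ : Fin 3 → ℝ, (∀ i, 0 < σ i) → fSym (fun _ => 1) ≤ fSym σ) :
    f (fun _ => 1) = 0 ∧ fderiv ℝ f (fun _ => 1) = 0 :=
  statement_5_general f hf_diff fSym hfSym h_struct h_isom
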